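/- Let 0 < q < 1, n ∈ ℕ, and u > 0 a real number. Then (q^{−2n} · w_SW(q^{−2n}u; q) / ((q;q)_n · w_SW(u; q))) · s̃_n(q^{−2n}u; q)² ≤ A_q(−u^{−1})² / (q;q)_∞². Equivalently, q^{2n²} u^{−2n} S_n(q^{−2n}u; q)² ≤ A_q(−u^{−1})² / (q;q)_∞². -/

import Mathlib

/-- The finite q-Pochhammer symbol `(a;q)_n = ∏_{j=0}^{n-1} (1 - a q^j)` in `ℝ`. -/
noncomputable def qPochR (q a : ℝ) (n : ℕ) : ℝ :=
  ∏ j ∈ Finset.range n, (1 - a * q ^ j)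

/-- The infinite q-Pochhammer symbol `(a;q)_∞ = ∏_{j=0}^{∞} (1 - a q^j)` in `ℝ`. -/
noncomputable def qPochInfR (q a : ℝ) : ℝ :=
  ∏' j : ℕ, (1 - a * q ^ j)

/-- The Stieltjes–Wigert polynomial
`S_n(x;q) = Σ_{k=0}^n q^{k²} (−x)^k / ((q;q)_k (q;q)_{n−k})` in `ℝ`. -/
noncomputable def stieltjesWigertR (q : ℝ) (n : ℕ) (x : ℝ) : ℝ :=
  ∑ k ∈ Finset.range (n + 1),
    q ^ (k ^ 2) * (-x) ^ k / (qPochR q q k * qPochR q q (n - k))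

/-- The Stieltjes–Wigert weight
`w_SW(x;q) = √(−1/(2π log q)) · exp{(1/(2 log q))(log(x/√q))²}`. -/
noncomputable def wSW (q x : ℝ) : ℝ :=
  Real.sqrt (-1 / (2 * Real.pi * Real.log q)) *
    Real.exp (1 / (2 * Real.log q) * Real.log (x / Real.sqrt q) ^ 2)

/-- The Ramanujan function restricted to real arguments:
`A_q(x) = Σ_{k=0}^∞ q^{k²} (−x)^k / (q;q)_k`. -/
noncomputable def ramanujanAqR (q x : ℝ) : ℝ :=
  ∑' k : ℕ, q ^ (k ^ 2) * (-x) ^ k / qPochR q q k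

/-!
Multiplying by `q^{n²} u^{-n}` and reversing the order of summation turns `S_n(q^{-2n} u)`
into `Σ_j (-1)^{n-j} q^{j²} u^{-j} / ((q;q)_{n-j} (q;q)_j)`. Bounding `(q;q)_{n-j}` below by
`(q;q)_∞` termwise leaves a partial sum of the positive series `A_q(-u⁻¹)`. The weighted form
reduces to this bound through the functional equation `w_SW(q^t x) = q^{t(t-1)/2} x^t w_SW(x)`.
-/

open Finset Filter Topology

section QPochhammer

variable {q : ℝ}

lemma one_sub_mul_pow_pos (hq0 : 0 ≤ q) (hq1 : q < 1) (j : ℕ) : 0 < 1 - q * q ^ j := by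
  have : q * q ^ j < 1 := by
    rw [← pow_succ']; exact pow_lt_one₀ hq0 hq1 (Nat.succ_ne_zero j)
  linarith

lemma one_sub_mul_pow_le_one (hq0 : 0 ≤ q) (j : ℕ) : 1 - q * q ^ j ≤ 1 := by
  have : 0 ≤ q * q ^ j := by positivity
  linarith

lemma qPochR_pos (hq0 : 0 ≤ q) (hq1 : q < 1) (n : ℕ) : 0 < qPochR q q n :=
  prod_pos fun j _ => one_sub_mul_pow_pos hq0 hq1 j

lemma summable_mul_pow (hq0 : 0 ≤ q) (hq1 : q < 1) : Summable fun j : ℕ => q * q ^ j :=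
  (summable_geometric_of_lt_one hq0 hq1).mul_left q

lemma multipliable_one_sub_mul_pow (hq0 : 0 ≤ q) (hq1 : q < 1) :
    Multipliable fun j : ℕ => 1 - q * q ^ j := by
  simpa only [sub_eq_add_neg] using
    Real.multipliable_one_add_of_summable (summable_mul_pow hq0 hq1).neg

lemma qPochInfR_pos (hq0 : 0 ≤ q) (hq1 : q < 1) : 0 < qPochInfR q q := by
  have hne : qPochInfR q q ≠ 0 := by
    simpa only [qPochInfR, sub_eq_add_neg] using
      tprod_one_add_ne_zero_of_summable (f := fun j : ℕ => -(q * q ^ j))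
        (fun j => by simpa only [← sub_eq_add_neg] using (one_sub_mul_pow_pos hq0 hq1 j).ne')
        (summable_mul_pow hq0 hq1).neg.norm
  exact hne.symm.lt_of_le (tprod_nonneg fun j => (one_sub_mul_pow_pos hq0 hq1 j).le)

lemma qPochInfR_le_qPochR (hq0 : 0 ≤ q) (hq1 : q < 1) (n : ℕ) :
    qPochInfR q q ≤ qPochR q q n := by
  have hanti : Antitone fun N => qPochR q q N :=
    (prod_anti_set_of_le_one (fun j => (one_sub_mul_pow_pos hq0 hq1 j).le)
      (one_sub_mul_pow_le_one hq0)).comp_monotone range_mono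
  exact hanti.le_of_tendsto (multipliable_one_sub_mul_pow hq0 hq1).hasProd.tendsto_prod_nat n

end QPochhammer

section RamanujanFunction

variable {q : ℝ}

lemma summable_pow_sq_mul_pow (hq0 : 0 ≤ q) (hq1 : q < 1) (v : ℝ) :
    Summable fun k : ℕ => q ^ (k ^ 2) * v ^ k := by
  have hlim : Tendsto (fun k : ℕ => q * (q ^ 2) ^ k * |v|) atTop (𝓝 0) := by
    simpa using ((tendsto_pow_atTop_nhds_zero_of_lt_one (sq_nonneg q)
      (by nlinarith)).const_mul q).mul_const |v|
  refine summable_of_ratio_norm_eventually_le (r := 1 / 2) (by norm_num) ?_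
  filter_upwards [hlim.eventually (gt_mem_nhds (by norm_num : (0 : ℝ) < 1 / 2))] with k hk
  have hstep : q ^ ((k + 1) ^ 2) * v ^ (k + 1) =
      (q * (q ^ 2) ^ k * v) * (q ^ (k ^ 2) * v ^ k) := by
    ring
  rw [hstep, norm_mul, Real.norm_eq_abs, abs_mul,
    abs_of_nonneg (by positivity : 0 ≤ q * (q ^ 2) ^ k)]
  gcongr

lemma summable_ramanujanAqR_terms (hq0 : 0 ≤ q) (hq1 : q < 1) (x : ℝ) :
    Summable fun k : ℕ => q ^ (k ^ 2) * (-x) ^ k / qPochR q q k := by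
  refine ((summable_pow_sq_mul_pow hq0 hq1 (-x)).norm.div_const (qPochInfR q q)).of_norm_bounded
    fun k => ?_
  rw [norm_div, Real.norm_of_nonneg (qPochR_pos hq0 hq1 k).le]
  gcongr
  · exact qPochInfR_pos hq0 hq1
  · exact qPochInfR_le_qPochR hq0 hq1 k

lemma sum_range_le_ramanujanAqR_neg (hq0 : 0 ≤ q) (hq1 : q < 1) {v : ℝ} (hv : 0 ≤ v)
    (N : ℕ) :
    ∑ k ∈ range N, q ^ (k ^ 2) * v ^ k / qPochR q q k ≤ ramanujanAqR q (-v) := by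
  have := (summable_ramanujanAqR_terms hq0 hq1 (-v)).sum_le_tsum (range N)
    fun k _ => div_nonneg (by simp only [neg_neg]; positivity) (qPochR_pos hq0 hq1 k).le
  simpa only [ramanujanAqR, neg_neg] using this

end RamanujanFunction

section StieltjesWigert

variable {q : ℝ}

lemma zpow_neg_two_mul_natCast {K : Type*} [DivisionRing K] (x : K) (n : ℕ) :
    x ^ (-(2 * (n : ℤ))) = (x ^ (2 * n))⁻¹ := by
  rw [zpow_neg]; norm_cast

lemma pow_sq_mul_inv_pow_mul_stieltjesWigertR (hq : q ≠ 0) (n : ℕ) {u : ℝ} (hu : u ≠ 0) :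
    q ^ (n ^ 2) * u⁻¹ ^ n * stieltjesWigertR q n (q ^ (-(2 * (n : ℤ))) * u) =
      ∑ j ∈ range (n + 1),
        (-1) ^ (n - j) * q ^ (j ^ 2) * u⁻¹ ^ j / (qPochR q q (n - j) * qPochR q q j) := by
  rw [stieltjesWigertR, mul_sum, ← sum_range_reflect]
  refine sum_congr rfl fun j hj => ?_
  obtain ⟨m, rfl⟩ := Nat.exists_eq_add_of_le' (Nat.lt_succ_iff.mp (mem_range.mp hj))
  simp only [Nat.add_sub_cancel, Nat.add_sub_cancel_left, zpow_neg_two_mul_natCast,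
    mul_div_assoc']
  congr 1
  -- `(j + m)² + m² - 2m(j + m) = j²`
  rw [neg_pow, mul_pow, inv_pow, inv_pow, inv_pow, ← pow_mul]
  field_simp
  ring

lemma abs_pow_sq_mul_inv_pow_mul_stieltjesWigertR_le (hq0 : 0 < q) (hq1 : q < 1) (n : ℕ) {u : ℝ}
    (hu : 0 < u) :
    |q ^ (n ^ 2) * u⁻¹ ^ n * stieltjesWigertR q n (q ^ (-(2 * (n : ℤ))) * u)| ≤
      ramanujanAqR q (-u⁻¹) / qPochInfR q q := by
  have hI := qPochInfR_pos hq0.le hq1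
  rw [pow_sq_mul_inv_pow_mul_stieltjesWigertR hq0.ne' n hu.ne']
  calc _ ≤ ∑ j ∈ range (n + 1),
          q ^ (j ^ 2) * u⁻¹ ^ j / (qPochR q q (n - j) * qPochR q q j) := by
        refine (abs_sum_le_sum_abs _ _).trans (sum_le_sum fun j _ => ?_)
        have := qPochR_pos hq0.le hq1 (n - j)
        have := qPochR_pos hq0.le hq1 j
        rw [abs_div, abs_mul, abs_mul, abs_pow, abs_neg, abs_one, one_pow, one_mul,
          ← abs_mul, abs_of_pos (by positivity), abs_of_pos (by positivity)]
    _ ≤ ∑ j ∈ range (n + 1), q ^ (j ^ 2) * u⁻¹ ^ j / (qPochInfR q q * qPochR q q j) := by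
        refine sum_le_sum fun j _ => ?_
        have := qPochR_pos hq0.le hq1 j
        gcongr
        exact qPochInfR_le_qPochR hq0.le hq1 _
    _ = (∑ j ∈ range (n + 1), q ^ (j ^ 2) * u⁻¹ ^ j / qPochR q q j) / qPochInfR q q := by
        rw [sum_div]
        exact sum_congr rfl fun j _ => by rw [mul_comm (qPochInfR q q), div_div]
    _ ≤ ramanujanAqR q (-u⁻¹) / qPochInfR q q := by
        gcongr
        exact sum_range_le_ramanujanAqR_neg hq0.le hq1 (inv_nonneg.mpr hu.le) _

end StieltjesWigert

section Weight

variable {q : ℝ}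

lemma wSW_rpow_mul (hq0 : 0 < q) (hq1 : q ≠ 1) {x : ℝ} (hx : 0 < x) (t : ℝ) :
    wSW q (q ^ t * x) = q ^ (t * (t - 1) / 2) * x ^ t * wSW q x := by
  have hlogq : Real.log q ≠ 0 := Real.log_ne_zero_of_pos_of_ne_one hq0 hq1
  have hlog : Real.log (q ^ t * x / √q) = t * Real.log q + Real.log (x / √q) := by
    rw [mul_div_assoc, Real.log_mul (by positivity) (by positivity), Real.log_rpow hq0]
  have hlogx : Real.log (x / √q) = Real.log x - Real.log q / 2 := by
    rw [Real.log_div hx.ne' (by positivity), Real.log_sqrt hq0.le]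
  rw [wSW, wSW, hlog, Real.rpow_def_of_pos hq0, Real.rpow_def_of_pos hx,
    ← Real.exp_add, mul_left_comm, ← Real.exp_add, hlogx]
  congr 2
  field_simp
  ring

lemma wSW_pos (hq0 : 0 < q) (hq1 : q < 1) (x : ℝ) : 0 < wSW q x := by
  have : 2 * Real.pi * Real.log q < 0 :=
    mul_neg_of_pos_of_neg (by positivity) (Real.log_neg hq0 hq1)
  have : 0 < -1 / (2 * Real.pi * Real.log q) := div_pos_of_neg_of_neg (by norm_num) this
  unfold wSW
  positivity

lemma wSW_zpow_neg_two_mul (hq0 : 0 < q) (hq1 : q ≠ 1) (n : ℕ) {u : ℝ} (hu : 0 < u) :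
    wSW q (q ^ (-(2 * (n : ℤ))) * u) =
      q ^ (n * (2 * n + 1)) * u ^ (-(2 * (n : ℤ))) * wSW q u := by
  have h := wSW_rpow_mul hq0 hq1 hu (-(2 * n : ℝ))
  rw [show -(2 * n : ℝ) * (-(2 * n) - 1) / 2 = ((n * (2 * n + 1) : ℕ) : ℝ) by push_cast; ring,
    Real.rpow_natCast, show -(2 * n : ℝ) = ((-(2 * (n : ℤ)) : ℤ) : ℝ) by push_cast; ring,
    Real.rpow_intCast, Real.rpow_intCast] at h
  exact h

lemma wSW_weighted_sq_eq (hq0 : 0 < q) (hq1 : q < 1) (n : ℕ) {u : ℝ} (hu : 0 < u) (s : ℝ) :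
    q ^ (-(2 * (n : ℤ))) * wSW q (q ^ (-(2 * (n : ℤ))) * u) / (qPochR q q n * wSW q u) *
        ((-1 : ℝ) ^ n * Real.sqrt (q ^ n * qPochR q q n) * s) ^ 2 =
      q ^ (2 * n ^ 2) * u ^ (-(2 * (n : ℤ))) * s ^ 2 := by
  have hw := wSW_pos hq0 hq1 u
  have hP := qPochR_pos hq0.le hq1 n
  rw [wSW_zpow_neg_two_mul hq0 hq1.ne n hu, mul_pow, mul_pow, Real.sq_sqrt (by positivity),
    ← pow_mul, mul_comm n 2, pow_mul (-1 : ℝ) 2 n, neg_one_sq, one_pow, one_mul,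
    zpow_neg_two_mul_natCast, zpow_neg_two_mul_natCast]
  field_simp
  ring

end Weight

/-- For `0 < q < 1`, `n ∈ ℕ` and real `u > 0`, with
`s̃_n(x;q) = (−1)^n √(q^n (q;q)_n) S_n(x;q)`:
`(q^{−2n} w_SW(q^{−2n}u;q)/((q;q)_n w_SW(u;q))) s̃_n(q^{−2n}u;q)² ≤ A_q(−u⁻¹)²/(q;q)_∞²`,
equivalently `q^{2n²} u^{−2n} S_n(q^{−2n}u;q)² ≤ A_q(−u⁻¹)²/(q;q)_∞²`. -/
theorem stieltjesWigert_weighted_sq_le (q : ℝ) (hq0 : 0 < q) (hq1 : q < 1)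
    (n : ℕ) (u : ℝ) (hu : 0 < u) :
    (q ^ (-(2 * (n : ℤ))) * wSW q (q ^ (-(2 * (n : ℤ))) * u) /
          (qPochR q q n * wSW q u)) *
        ((-1 : ℝ) ^ n * Real.sqrt (q ^ n * qPochR q q n) *
          stieltjesWigertR q n (q ^ (-(2 * (n : ℤ))) * u)) ^ 2 ≤
      ramanujanAqR q (-u⁻¹) ^ 2 / qPochInfR q q ^ 2 ∧
    q ^ (2 * n ^ 2) * u ^ (-(2 * (n : ℤ))) *
        stieltjesWigertR q n (q ^ (-(2 * (n : ℤ))) * u) ^ 2 ≤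
      ramanujanAqR q (-u⁻¹) ^ 2 / qPochInfR q q ^ 2 := by
  set S := stieltjesWigertR q n (q ^ (-(2 * (n : ℤ))) * u)
  have hsq : q ^ (2 * n ^ 2) * u ^ (-(2 * (n : ℤ))) * S ^ 2 =
      (q ^ (n ^ 2) * u⁻¹ ^ n * S) ^ 2 := by
    rw [zpow_neg_two_mul_natCast]
    ring
  have hbound : q ^ (2 * n ^ 2) * u ^ (-(2 * (n : ℤ))) * S ^ 2 ≤
      ramanujanAqR q (-u⁻¹) ^ 2 / qPochInfR q q ^ 2 := by
    rw [hsq, ← div_pow, ← sq_abs]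
    exact pow_le_pow_left₀ (abs_nonneg _)
      (abs_pow_sq_mul_inv_pow_mul_stieltjesWigertR_le hq0 hq1 n hu) 2
  exact ⟨(wSW_weighted_sq_eq hq0 hq1 n hu S).trans_le hbound, hbound⟩
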